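/- Consider the classical determinantal case: m×n grid, and let C ⊆ [1,m]×[1,n] be a maximal subset containing no diagonal chain of size u+1 (where 0 < u ≤ min(m,n)). Then C consists of the lattice points in the union of u vertex-disjoint lattice paths from (m-u+i, i) to (i, n-u+i) for i = 1,…,u, together with the two corner triangles { (i,j) : j ≤ i-(m-u) } and { (i,j) : i ≤ j-(n-u) }; in particular |C| = u(m-u) + u(n-u) + u². -/

import Mathlib

/-- A diagonal chain: a finite set of points in ℤ² that is strictly increasing
in both coordinates. -/
def IsDiagChain (D : Finset (ℤ × ℤ)) : Prop :=
  ∀ P ∈ D, ∀ Q ∈ D, P ≠ Q → (P.1 < Q.1 ∧ P.2 < Q.2) ∨ (Q.1 < P.1 ∧ Q.2 < P.2)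

/-- A lattice path in matrix coordinates: a nonempty list of points in ℤ² where
consecutive points differ by an east step (0,1) or a north step (-1,0). -/
def IsLatticePath (P : List (ℤ × ℤ)) : Prop :=
  P ≠ [] ∧ P.Chain' (fun A B => B = (A.1, A.2 + 1) ∨ B = (A.1 - 1, A.2))

/-!
For a point `P` let `chainBelow C P` and `chainAbove C P` be the largest sizes of chains of `C`
strictly below and strictly above `P`. The chain bound gives `chainBelow + chainAbove + 1 ≤ u` on
`C`, and maximality gives `chainBelow + chainAbove ≥ u` off `C`. Hence the closed corner triangles
lie in `C`, and an induction along diagonals shows that every other point of `C` is tight: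
`chainBelow + chainAbove + 1 = u`. The tight points with `chainBelow = r` form the `r`-th path:
from each of them the east or the north neighbour is again tight with the same rank, because a
chain below the east neighbour and a chain above the north neighbour together form a chain of `C`.
Each path meets each of the `m + n - 2u + 1` diagonals in one point, and each strict corner has
`u(u-1)/2` points.
-/

open Finset

instance : DecidablePred IsDiagChain := fun D => by unfold IsDiagChain; infer_instance

lemma isDiagChain_singleton (P : ℤ × ℤ) : IsDiagChain {P} := by
  simp [IsDiagChain]

lemma IsDiagChain.mono {D D' : Finset (ℤ × ℤ)} (hD' : IsDiagChain D') (h : D ⊆ D') :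
    IsDiagChain D :=
  fun P hP Q hQ hPQ => hD' P (h hP) Q (h hQ) hPQ

lemma IsDiagChain.union {A B : Finset (ℤ × ℤ)} (hA : IsDiagChain A) (hB : IsDiagChain B)
    (hAB : ∀ P ∈ A, ∀ Q ∈ B, P.1 < Q.1 ∧ P.2 < Q.2) : IsDiagChain (A ∪ B) := by
  intro P hP Q hQ hPQ
  rcases mem_union.mp hP with hP | hP <;> rcases mem_union.mp hQ with hQ | hQ
  · exact hA P hP Q hQ hPQ
  · exact .inl (hAB P hP Q hQ)
  · exact .inr (hAB Q hQ P hP)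
  · exact hB P hP Q hQ hPQ

lemma IsDiagChain.card_le_of_fst_mem_Icc {D : Finset (ℤ × ℤ)} (hD : IsDiagChain D) {a b : ℤ}
    (h : ∀ P ∈ D, a ≤ P.1 ∧ P.1 ≤ b) : D.card ≤ (b + 1 - a).toNat := by
  rw [← Int.card_Icc]
  refine card_le_card_of_injOn Prod.fst (fun P hP => mem_Icc.mpr (h P hP)) ?_
  intro P hP Q hQ hPQ
  by_contra hne
  rcases hD P hP Q hQ hne with h' | h' <;> simp_all

lemma IsDiagChain.card_le_of_snd_mem_Icc {D : Finset (ℤ × ℤ)} (hD : IsDiagChain D) {a b : ℤ}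
    (h : ∀ P ∈ D, a ≤ P.2 ∧ P.2 ≤ b) : D.card ≤ (b + 1 - a).toNat := by
  rw [← Int.card_Icc]
  refine card_le_card_of_injOn Prod.snd (fun P hP => mem_Icc.mpr (h P hP)) ?_
  intro P hP Q hQ hPQ
  by_contra hne
  rcases hD P hP Q hQ hne with h' | h' <;> simp_all

def chainNum (S : Finset (ℤ × ℤ)) : ℕ := (S.powerset.filter IsDiagChain).sup card

lemma card_le_chainNum {D S : Finset (ℤ × ℤ)} (hDS : D ⊆ S) (hD : IsDiagChain D) :
    D.card ≤ chainNum S :=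
  le_sup (mem_filter.mpr ⟨mem_powerset.mpr hDS, hD⟩)

lemma exists_card_eq_chainNum (S : Finset (ℤ × ℤ)) :
    ∃ D ⊆ S, IsDiagChain D ∧ D.card = chainNum S := by
  obtain ⟨D, hD, hcard⟩ := exists_mem_eq_sup (S.powerset.filter IsDiagChain)
    ⟨∅, by simp [IsDiagChain]⟩ card
  rw [mem_filter, mem_powerset] at hD
  exact ⟨D, hD.1, hD.2, hcard.symm⟩

lemma chainNum_mono {S T : Finset (ℤ × ℤ)} (h : S ⊆ T) : chainNum S ≤ chainNum T := by
  obtain ⟨D, hDS, hD, hcard⟩ := exists_card_eq_chainNum S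
  exact hcard ▸ card_le_chainNum (hDS.trans h) hD

lemma chainNum_add_chainNum_le {S T : Finset (ℤ × ℤ)}
    (hST : ∀ P ∈ S, ∀ Q ∈ T, P.1 < Q.1 ∧ P.2 < Q.2) :
    chainNum S + chainNum T ≤ chainNum (S ∪ T) := by
  obtain ⟨A, hAS, hA, hAcard⟩ := exists_card_eq_chainNum S
  obtain ⟨B, hBT, hB, hBcard⟩ := exists_card_eq_chainNum T
  have hAB : ∀ P ∈ A, ∀ Q ∈ B, P.1 < Q.1 ∧ P.2 < Q.2 := fun P hP Q hQ => hST P (hAS hP) Q (hBT hQ)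
  have hdisj : Disjoint A B :=
    disjoint_left.mpr fun P hPA hPB => (lt_irrefl P.1) (hAB P hPA P hPB).1
  rw [← hAcard, ← hBcard, ← card_union_of_disjoint hdisj]
  exact card_le_chainNum (union_subset_union hAS hBT) (hA.union hB hAB)

def chainBelow (C : Finset (ℤ × ℤ)) (P : ℤ × ℤ) : ℕ :=
  chainNum (C.filter fun Q => Q.1 < P.1 ∧ Q.2 < P.2)

def chainAbove (C : Finset (ℤ × ℤ)) (P : ℤ × ℤ) : ℕ :=
  chainNum (C.filter fun Q => P.1 < Q.1 ∧ P.2 < Q.2)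

section Rank

variable {C : Finset (ℤ × ℤ)} {P Q : ℤ × ℤ}

lemma chainBelow_mono (h1 : P.1 ≤ Q.1) (h2 : P.2 ≤ Q.2) : chainBelow C P ≤ chainBelow C Q :=
  chainNum_mono fun R hR => by
    simp only [mem_filter] at hR ⊢
    exact ⟨hR.1, by omega, by omega⟩

lemma chainAbove_anti (h1 : P.1 ≤ Q.1) (h2 : P.2 ≤ Q.2) : chainAbove C Q ≤ chainAbove C P :=
  chainNum_mono fun R hR => by
    simp only [mem_filter] at hR ⊢
    exact ⟨hR.1, by omega, by omega⟩

/-- Dropping the top element of a chain below `Q` leaves a chain below `P`. -/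
lemma chainBelow_le_add_one (h1 : Q.1 ≤ P.1 + 1) (h2 : Q.2 ≤ P.2 + 1) :
    chainBelow C Q ≤ chainBelow C P + 1 := by
  obtain ⟨D, hDC, hD, hcard⟩ := exists_card_eq_chainNum (C.filter fun R => R.1 < Q.1 ∧ R.2 < Q.2)
  unfold chainBelow
  rw [← hcard]
  obtain rfl | hne := D.eq_empty_or_nonempty
  · simp
  obtain ⟨T, hT, hTmax⟩ := exists_max_image D Prod.fst hne
  have hsub : D.erase T ⊆ C.filter fun R => R.1 < P.1 ∧ R.2 < P.2 := by
    intro R hR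
    obtain ⟨hRT, hRD⟩ := mem_erase.mp hR
    have hTQ := (mem_filter.mp (hDC hT)).2
    have hRT' : R.1 < T.1 ∧ R.2 < T.2 := by
      rcases hD R hRD T hT hRT with h | h
      · exact h
      · exact absurd (hTmax R hRD) (not_le.mpr h.1)
    exact mem_filter.mpr ⟨(mem_filter.mp (hDC hRD)).1, by omega, by omega⟩
  have := card_le_chainNum hsub (hD.mono (erase_subset T D))
  rw [card_erase_of_mem hT] at this
  have := card_pos.mpr hne
  omega

lemma chainAbove_add_one_le (hQ : Q ∈ C) (h1 : P.1 < Q.1) (h2 : P.2 < Q.2) :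
    chainAbove C Q + 1 ≤ chainAbove C P := by
  have hQ1 : 1 ≤ chainNum {Q} := by
    simpa using card_le_chainNum (subset_refl _) (isDiagChain_singleton Q)
  calc chainAbove C Q + 1 ≤ chainNum {Q} + chainAbove C Q := by omega
    _ ≤ chainNum ({Q} ∪ C.filter fun R => Q.1 < R.1 ∧ Q.2 < R.2) :=
        chainNum_add_chainNum_le fun R hR S hS => by
          rw [mem_singleton.mp hR]; exact (mem_filter.mp hS).2
    _ ≤ chainAbove C P := chainNum_mono <| union_subset
        (singleton_subset_iff.mpr (mem_filter.mpr ⟨hQ, h1, h2⟩))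
        fun R hR => by
          simp only [mem_filter] at hR ⊢
          exact ⟨hR.1, by omega, by omega⟩

lemma chainBelow_add_chainAbove_le (h1 : P.1 ≤ Q.1 + 1) (h2 : P.2 ≤ Q.2 + 1) :
    chainBelow C P + chainAbove C Q ≤ chainNum C :=
  (chainNum_add_chainNum_le fun R hR S hS => by
      simp only [mem_filter] at hR hS
      omega).trans
    (chainNum_mono (union_subset (filter_subset _ _) (filter_subset _ _)))

lemma chainBelow_add_chainAbove_add_one_le (hP : P ∈ C) :
    chainBelow C P + chainAbove C P + 1 ≤ chainNum C :=
  calc chainBelow C P + chainAbove C P + 1 ≤ chainBelow C P + chainAbove C (P.1 - 1, P.2 - 1) :=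
        by have := chainAbove_add_one_le (C := C) (P := (P.1 - 1, P.2 - 1)) hP
              (by simp) (by simp); omega
    _ ≤ chainNum C := chainBelow_add_chainAbove_le (by simp) (by simp)

lemma card_le_chainBelow_add_chainAbove_add_one {D : Finset (ℤ × ℤ)} (hD : IsDiagChain D)
    (hDC : D ⊆ insert P C) (hPD : P ∈ D) :
    D.card ≤ chainBelow C P + chainAbove C P + 1 := by
  set B := D.filter fun Q => Q.1 < P.1 ∧ Q.2 < P.2
  set A := D.filter fun Q => P.1 < Q.1 ∧ P.2 < Q.2
  have hsplit : D ⊆ insert P (B ∪ A) := by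
    intro Q hQ
    by_cases hQP : Q = P
    · exact hQP ▸ mem_insert_self _ _
    refine mem_insert_of_mem ?_
    rcases hD Q hQ P hPD hQP with h | h
    · exact mem_union_left _ (mem_filter.mpr ⟨hQ, h⟩)
    · exact mem_union_right _ (mem_filter.mpr ⟨hQ, h⟩)
  have hBA : ∀ {p : ℤ × ℤ → Prop} [DecidablePred p], (∀ Q, p Q → Q ≠ P) →
      (D.filter p).card ≤ chainNum (C.filter p) := by
    intro p _ hp
    refine card_le_chainNum (fun Q hQ => ?_) (hD.mono (filter_subset _ _))
    obtain ⟨hQD, hpQ⟩ := mem_filter.mp hQ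
    exact mem_filter.mpr ⟨(mem_insert.mp (hDC hQD)).resolve_left (hp Q hpQ), hpQ⟩
  have hB : B.card ≤ chainBelow C P := hBA fun Q hQ hQP => by subst hQP; omega
  have hA : A.card ≤ chainAbove C P := hBA fun Q hQ hQP => by subst hQP; omega
  calc D.card ≤ (insert P (B ∪ A)).card := card_le_card hsplit
    _ ≤ (B ∪ A).card + 1 := card_insert_le _ _
    _ ≤ B.card + A.card + 1 := by gcongr; exact card_union_le _ _
    _ ≤ _ := by omega

end Rank

lemma isDiagChain_image_diagonal (a b : ℤ) (s : Finset ℕ) :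
    IsDiagChain (s.image fun k : ℕ => (a + k, b + k)) := by
  intro P hP Q hQ hPQ
  obtain ⟨k, -, rfl⟩ := mem_image.mp hP
  obtain ⟨l, -, rfl⟩ := mem_image.mp hQ
  rcases lt_trichotomy k l with h | rfl | h
  · left; simp only; omega
  · exact absurd rfl hPQ
  · right; simp only; omega

structure IsMaximalChainBounded (m n u : ℕ) (C : Finset (ℤ × ℤ)) : Prop where
  u_le_m : u ≤ m
  u_le_n : u ≤ n
  mem_grid : ∀ P ∈ C, 1 ≤ P.1 ∧ P.1 ≤ (m : ℤ) ∧ 1 ≤ P.2 ∧ P.2 ≤ (n : ℤ)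
  card_le : ∀ D : Finset (ℤ × ℤ), D ⊆ C → IsDiagChain D → D.card ≤ u
  maximal : ∀ P : ℤ × ℤ, 1 ≤ P.1 → P.1 ≤ (m : ℤ) → 1 ≤ P.2 → P.2 ≤ (n : ℤ) → P ∉ C →
    ∃ D : Finset (ℤ × ℤ), D ⊆ insert P C ∧ IsDiagChain D ∧ D.card = u + 1

namespace IsMaximalChainBounded

variable {m n u : ℕ} {C : Finset (ℤ × ℤ)} {P : ℤ × ℤ}

lemma chainNum_le (hC : IsMaximalChainBounded m n u C) : chainNum C ≤ u := by
  obtain ⟨D, hDC, hD, hcard⟩ := exists_card_eq_chainNum C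
  exact hcard ▸ hC.card_le D hDC hD

lemma add_one_le (hC : IsMaximalChainBounded m n u C) (hP : P ∈ C) :
    chainBelow C P + chainAbove C P + 1 ≤ u :=
  (chainBelow_add_chainAbove_add_one_le hP).trans hC.chainNum_le

lemma mem_of_add_lt (hC : IsMaximalChainBounded m n u C) (h1 : 1 ≤ P.1) (h2 : P.1 ≤ (m : ℤ))
    (h3 : 1 ≤ P.2) (h4 : P.2 ≤ (n : ℤ)) (h : chainBelow C P + chainAbove C P < u) : P ∈ C := by
  by_contra hP
  obtain ⟨D, hDC, hD, hcard⟩ := hC.maximal P h1 h2 h3 h4 hP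
  have hPD : P ∈ D := by
    by_contra hPD
    have hDC' : D ⊆ C := fun Q hQ =>
      (mem_insert.mp (hDC hQ)).resolve_left fun hQP => hPD (hQP ▸ hQ)
    have := hC.card_le D hDC' hD
    omega
  have := card_le_chainBelow_add_chainAbove_add_one hD hDC hPD
  omega

lemma chainBelow_lt (hC : IsMaximalChainBounded m n u C) (h1 : 1 ≤ P.1) (h2 : 1 ≤ P.2) :
    (chainBelow C P : ℤ) < P.1 ∧ (chainBelow C P : ℤ) < P.2 := by
  obtain ⟨D, hDC, hD, hcard⟩ := exists_card_eq_chainNum (C.filter fun Q => Q.1 < P.1 ∧ Q.2 < P.2)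
  have hb : ∀ Q ∈ D, (1 ≤ Q.1 ∧ Q.1 ≤ P.1 - 1) ∧ (1 ≤ Q.2 ∧ Q.2 ≤ P.2 - 1) := fun Q hQ => by
    obtain ⟨hQC, hQP⟩ := mem_filter.mp (hDC hQ)
    have := hC.mem_grid Q hQC
    omega
  have := hD.card_le_of_fst_mem_Icc fun Q hQ => (hb Q hQ).1
  have := hD.card_le_of_snd_mem_Icc fun Q hQ => (hb Q hQ).2
  unfold chainBelow
  omega

lemma chainAbove_le (hC : IsMaximalChainBounded m n u C) (h1 : P.1 ≤ m) (h2 : P.2 ≤ n) :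
    (chainAbove C P : ℤ) ≤ m - P.1 ∧ (chainAbove C P : ℤ) ≤ n - P.2 := by
  obtain ⟨D, hDC, hD, hcard⟩ := exists_card_eq_chainNum (C.filter fun Q => P.1 < Q.1 ∧ P.2 < Q.2)
  have hb : ∀ Q ∈ D, (P.1 + 1 ≤ Q.1 ∧ Q.1 ≤ m) ∧ (P.2 + 1 ≤ Q.2 ∧ Q.2 ≤ n) := fun Q hQ => by
    obtain ⟨hQC, hQP⟩ := mem_filter.mp (hDC hQ)
    have := hC.mem_grid Q hQC
    omega
  have := hD.card_le_of_fst_mem_Icc fun Q hQ => (hb Q hQ).1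
  have := hD.card_le_of_snd_mem_Icc fun Q hQ => (hb Q hQ).2
  unfold chainAbove
  omega

lemma mem_of_le_lower (hC : IsMaximalChainBounded m n u C) (h1 : 1 ≤ P.1) (h2 : P.1 ≤ (m : ℤ))
    (h3 : 1 ≤ P.2) (h4 : P.2 ≤ (n : ℤ)) (h : P.2 ≤ P.1 - ((m : ℤ) - u)) : P ∈ C := by
  have := hC.chainBelow_lt h1 h3
  have := hC.chainAbove_le h2 h4
  exact hC.mem_of_add_lt h1 h2 h3 h4 (by omega)

lemma mem_of_le_upper (hC : IsMaximalChainBounded m n u C) (h1 : 1 ≤ P.1) (h2 : P.1 ≤ (m : ℤ))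
    (h3 : 1 ≤ P.2) (h4 : P.2 ≤ (n : ℤ)) (h : P.1 ≤ P.2 - ((n : ℤ) - u)) : P ∈ C := by
  have := hC.chainBelow_lt h1 h3
  have := hC.chainAbove_le h2 h4
  exact hC.mem_of_add_lt h1 h2 h3 h4 (by omega)

/-- Witnessed by the diagonal `(m - u + 1 + k, 1 + k)`, `k < K`, which lies in the closed lower
corner. -/
lemma le_chainBelow_of_lower (hC : IsMaximalChainBounded m n u C) {K : ℕ} (hK : K ≤ u)
    (h1 : (m : ℤ) - u + K < P.1) (h2 : (K : ℤ) < P.2) : K ≤ chainBelow C P := by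
  have hinj : Function.Injective fun k : ℕ => ((m : ℤ) - u + 1 + k, (1 : ℤ) + k) :=
    fun k l hkl => by simpa using congrArg Prod.snd hkl
  have := hC.u_le_m; have := hC.u_le_n
  rw [← card_range K, ← card_image_of_injective _ hinj]
  refine card_le_chainNum (fun Q hQ => ?_) (isDiagChain_image_diagonal _ _ _)
  obtain ⟨k, hk, rfl⟩ := mem_image.mp hQ
  rw [mem_range] at hk
  exact mem_filter.mpr ⟨hC.mem_of_le_lower (by omega) (by omega) (by omega) (by omega)
    (by simp only; omega), by simp only; omega, by simp only; omega⟩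

lemma le_chainBelow_of_upper (hC : IsMaximalChainBounded m n u C) {K : ℕ} (hK : K ≤ u)
    (h1 : (K : ℤ) < P.1) (h2 : (n : ℤ) - u + K < P.2) : K ≤ chainBelow C P := by
  have hinj : Function.Injective fun k : ℕ => ((1 : ℤ) + k, (n : ℤ) - u + 1 + k) :=
    fun k l hkl => by simpa using congrArg Prod.fst hkl
  have := hC.u_le_m; have := hC.u_le_n
  rw [← card_range K, ← card_image_of_injective _ hinj]
  refine card_le_chainNum (fun Q hQ => ?_) (isDiagChain_image_diagonal _ _ _)
  obtain ⟨k, hk, rfl⟩ := mem_image.mp hQ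
  rw [mem_range] at hk
  exact mem_filter.mpr ⟨hC.mem_of_le_upper (by omega) (by omega) (by omega) (by omega)
    (by simp only; omega), by simp only; omega, by simp only; omega⟩

lemma succ_diag_of_add_two_le (hC : IsMaximalChainBounded m n u C) (hP : P ∈ C)
    (h : chainBelow C P + chainAbove C P + 2 ≤ u) (h1 : P.1 < m) (h2 : P.2 < n) :
    (P.1 + 1, P.2 + 1) ∈ C ∧
      chainBelow C (P.1 + 1, P.2 + 1) + chainAbove C (P.1 + 1, P.2 + 1) + 2 ≤ u := by
  have hgrid := hC.mem_grid P hP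
  have hbelow : chainBelow C (P.1 + 1, P.2 + 1) ≤ chainBelow C P + 1 :=
    chainBelow_le_add_one le_rfl le_rfl
  have habove : chainAbove C (P.1 + 1, P.2 + 1) ≤ chainAbove C P :=
    chainAbove_anti (by simp) (by simp)
  have hQ : (P.1 + 1, P.2 + 1) ∈ C :=
    hC.mem_of_add_lt (by simp only; omega) (by simp only; omega) (by simp only; omega)
      (by simp only; omega) (by omega)
  have habove' := chainAbove_add_one_le (C := C) hQ (lt_add_one P.1) (lt_add_one P.2)
  exact ⟨hQ, by omega⟩

lemma snd_lt_of_fst_eq (hC : IsMaximalChainBounded m n u C)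
    (h : chainBelow C P + chainAbove C P + 2 ≤ u) (hP : P.1 = m) : P.2 < u := by
  by_contra! hu
  have := hC.le_chainBelow_of_lower (K := u - 1) (P := P) (by omega) (by omega) (by omega)
  omega

lemma fst_lt_of_snd_eq (hC : IsMaximalChainBounded m n u C)
    (h : chainBelow C P + chainAbove C P + 2 ≤ u) (hP : P.2 = n) : P.1 < u := by
  by_contra! hu
  have := hC.le_chainBelow_of_upper (K := u - 1) (P := P) (by omega) (by omega) (by omega)
  omega

/-- Induction along the diagonal through `P`: on the last row or column, the diagonals bounding
the corners give long chains below `P`. -/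
lemma lt_or_lt_of_add_two_le (hC : IsMaximalChainBounded m n u C) (hP : P ∈ C)
    (h : chainBelow C P + chainAbove C P + 2 ≤ u) :
    P.2 < P.1 - ((m : ℤ) - u) ∨ P.1 < P.2 - ((n : ℤ) - u) := by
  obtain ⟨k, hk⟩ : ∃ k : ℕ, (m : ℤ) - P.1 = k := ⟨(m - P.1).toNat, by
    have := hC.mem_grid P hP; omega⟩
  induction k generalizing P with
  | zero => exact .inl (by have := hC.snd_lt_of_fst_eq h (by omega); omega)
  | succ k ih =>
    have hgrid := hC.mem_grid P hP
    by_cases hn : P.2 = n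
    · exact .inr (by have := hC.fst_lt_of_snd_eq h hn; omega)
    obtain ⟨hQ, hQ'⟩ := hC.succ_diag_of_add_two_le hP h (by omega) (by omega)
    have := ih hQ hQ' (by simp only; push_cast at hk ⊢; omega)
    simp only at this
    omega

lemma add_one_eq_iff (hC : IsMaximalChainBounded m n u C) (hP : P ∈ C) :
    chainBelow C P + chainAbove C P + 1 = u ↔
      P.1 - ((m : ℤ) - u) ≤ P.2 ∧ P.2 - ((n : ℤ) - u) ≤ P.1 := by
  have hgrid := hC.mem_grid P hP
  have := hC.add_one_le hP
  have := hC.chainBelow_lt hgrid.1 hgrid.2.2.1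
  have := hC.chainAbove_le hgrid.2.1 hgrid.2.2.2
  constructor
  · intro h; omega
  · intro h
    by_contra hne
    rcases hC.lt_or_lt_of_add_two_le hP (by omega) with h' | h' <;> omega

end IsMaximalChainBounded

/-- The `r`-th path: points of `C` that are the `(r + 1)`-st point of a chain of `C` of size `u`. -/
def OnPath (C : Finset (ℤ × ℤ)) (u r : ℕ) (P : ℤ × ℤ) : Prop :=
  P ∈ C ∧ chainBelow C P = r ∧ chainBelow C P + chainAbove C P + 1 = u

instance (C : Finset (ℤ × ℤ)) (u r : ℕ) : DecidablePred (OnPath C u r) := fun _ => by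
  unfold OnPath; infer_instance

def startPt (m u r : ℕ) : ℤ × ℤ := ((m : ℤ) - u + r + 1, (r : ℤ) + 1)

def endPt (n u r : ℕ) : ℤ × ℤ := ((r : ℤ) + 1, (n : ℤ) - u + r + 1)

def pathStep (C : Finset (ℤ × ℤ)) (u r : ℕ) (P : ℤ × ℤ) : ℤ × ℤ :=
  if OnPath C u r (P.1, P.2 + 1) then (P.1, P.2 + 1) else (P.1 - 1, P.2)

def latticePath (m n u r : ℕ) (C : Finset (ℤ × ℤ)) : List (ℤ × ℤ) :=
  (List.range (m + n - 2 * u + 1)).map fun k => (pathStep C u r)^[k] (startPt m u r)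

lemma isLatticePath_latticePath (m n u r : ℕ) (C : Finset (ℤ × ℤ)) :
    IsLatticePath (latticePath m n u r C) := by
  refine ⟨by simp [latticePath], ?_⟩
  show List.IsChain _ _
  rw [latticePath, List.isChain_map, List.isChain_range_succ]
  intro k _
  rw [Function.iterate_succ_apply']
  unfold pathStep
  split_ifs <;> simp

lemma latticePath_head (m n u r : ℕ) (C : Finset (ℤ × ℤ)) :
    (latticePath m n u r C).head? = some (startPt m u r) := by
  simp [latticePath, List.range_succ_eq_map]

lemma OnPath.eq_of_sub_eq {C : Finset (ℤ × ℤ)} {u r : ℕ} {P Q : ℤ × ℤ} (hP : OnPath C u r P)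
    (hQ : OnPath C u r Q) (h : P.1 - P.2 = Q.1 - Q.2) : P = Q := by
  have key : ∀ {X Y : ℤ × ℤ}, OnPath C u r X → OnPath C u r Y → X.1 - X.2 = Y.1 - Y.2 →
      ¬ X.1 < Y.1 := fun hX hY hXY hlt => by
    have := chainAbove_add_one_le hY.1 hlt (by omega)
    have := hX.2; have := hY.2
    omega
  rcases lt_trichotomy P.1 Q.1 with hlt | heq | hgt
  · exact absurd hlt (key hP hQ h)
  · exact Prod.ext heq (by omega)
  · exact absurd hgt (key hQ hP h.symm)

noncomputable def lowerCorner (m n u : ℕ) : Finset (ℤ × ℤ) :=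
  (Icc 1 (m : ℤ) ×ˢ Icc 1 (n : ℤ)).filter fun P => P.2 < P.1 - ((m : ℤ) - u)

noncomputable def upperCorner (m n u : ℕ) : Finset (ℤ × ℤ) :=
  (Icc 1 (m : ℤ) ×ˢ Icc 1 (n : ℤ)).filter fun P => P.1 < P.2 - ((n : ℤ) - u)

/-- The two corners are copies of the two halves of the off-diagonal of `[0, u) × [0, u)`. -/
lemma card_lowerCorner_add_card_upperCorner {m n u : ℕ} (hum : u ≤ m) (hun : u ≤ n) :
    (lowerCorner m n u).card + (upperCorner m n u).card = u * u - u := by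
  have hlower : (lowerCorner m n u).card =
      ((range u).offDiag.filter fun x => x.2 < x.1).card := by
    refine card_nbij' (fun P => ((P.1 - (m - u) - 1).toNat, (P.2 - 1).toNat))
      (fun x => ((m : ℤ) - u + 1 + x.1, 1 + x.2)) ?_ ?_ ?_ ?_ <;>
    · intro x hx
      simp only [lowerCorner, mem_coe, mem_filter, mem_product, mem_Icc, mem_offDiag,
        mem_range, Prod.ext_iff] at hx ⊢
      omega
  have hupper : (upperCorner m n u).card =
      ((range u).offDiag.filter fun x => ¬ x.2 < x.1).card := by
    refine card_nbij' (fun P => ((P.1 - 1).toNat, (P.2 - (n - u) - 1).toNat))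
      (fun x => (1 + x.1, (n : ℤ) - u + 1 + x.2)) ?_ ?_ ?_ ?_ <;>
    · intro x hx
      simp only [upperCorner, mem_coe, mem_filter, mem_product, mem_Icc, mem_offDiag,
        mem_range, Prod.ext_iff] at hx ⊢
      omega
  rw [hlower, hupper, card_filter_add_card_filter_not, offDiag_card, card_range]

namespace IsMaximalChainBounded

variable {m n u r : ℕ} {C : Finset (ℤ × ℤ)} {P : ℤ × ℤ}

lemma onPath_startPt (hC : IsMaximalChainBounded m n u C) (hr : r < u) :
    OnPath C u r (startPt m u r) := by
  have := hC.u_le_m; have := hC.u_le_n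
  unfold startPt
  have hP := hC.mem_of_le_lower (P := ((m : ℤ) - u + r + 1, (r : ℤ) + 1))
    (by omega) (by omega) (by omega) (by omega) (by omega)
  have hge := hC.le_chainBelow_of_lower (P := ((m : ℤ) - u + r + 1, (r : ℤ) + 1)) hr.le
    (by omega) (by omega)
  have hlt := (hC.chainBelow_lt (P := ((m : ℤ) - u + r + 1, (r : ℤ) + 1)) (by omega)
    (by omega)).2
  have htight := (hC.add_one_eq_iff hP).mpr ⟨by omega, by omega⟩
  exact ⟨hP, by omega, htight⟩

lemma onPath_endPt (hC : IsMaximalChainBounded m n u C) (hr : r < u) :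
    OnPath C u r (endPt n u r) := by
  have := hC.u_le_m; have := hC.u_le_n
  unfold endPt
  have hP := hC.mem_of_le_upper (P := ((r : ℤ) + 1, (n : ℤ) - u + r + 1))
    (by omega) (by omega) (by omega) (by omega) (by omega)
  have hge := hC.le_chainBelow_of_upper (P := ((r : ℤ) + 1, (n : ℤ) - u + r + 1)) hr.le
    (by omega) (by omega)
  have hlt := (hC.chainBelow_lt (P := ((r : ℤ) + 1, (n : ℤ) - u + r + 1)) (by omega)
    (by omega)).1
  have htight := (hC.add_one_eq_iff hP).mpr ⟨by omega, by omega⟩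
  exact ⟨hP, by omega, htight⟩

lemma sub_mem_Icc_of_onPath (hC : IsMaximalChainBounded m n u C) (hP : OnPath C u r P) :
    P.1 - P.2 ∈ Set.Icc ((u : ℤ) - n) ((m : ℤ) - u) := by
  have hgrid := hC.mem_grid P hP.1
  have := hC.chainBelow_lt hgrid.1 hgrid.2.2.1
  have := hC.chainAbove_le hgrid.2.1 hgrid.2.2.2
  have := hP.2
  exact ⟨by omega, by omega⟩

lemma onPath_east (hC : IsMaximalChainBounded m n u C) (hP : OnPath C u r P)
    (hd : (u : ℤ) - n < P.1 - P.2) (hn : P.2 < n) (hE : chainBelow C (P.1, P.2 + 1) ≤ r) :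
    OnPath C u r (P.1, P.2 + 1) := by
  obtain ⟨hPC, hr, htight⟩ := hP
  have hgrid := hC.mem_grid P hPC
  have hbelow : r ≤ chainBelow C (P.1, P.2 + 1) := hr ▸ chainBelow_mono le_rfl (by simp)
  have habove : chainAbove C (P.1, P.2 + 1) ≤ chainAbove C P := chainAbove_anti le_rfl (by simp)
  have hEC : (P.1, P.2 + 1) ∈ C :=
    hC.mem_of_add_lt hgrid.1 hgrid.2.1 (by simp only; omega) (by simp only; omega) (by omega)
  have hPc := (hC.add_one_eq_iff hPC).mp htight
  refine ⟨hEC, by omega, (hC.add_one_eq_iff hEC).mpr ⟨by simp only; omega, by simp only; omega⟩⟩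

lemma onPath_north (hC : IsMaximalChainBounded m n u C) (hP : OnPath C u r P)
    (hd : (u : ℤ) - n < P.1 - P.2) (h1 : 2 ≤ P.1)
    (hN : chainAbove C (P.1 - 1, P.2) ≤ chainAbove C P) : OnPath C u r (P.1 - 1, P.2) := by
  obtain ⟨hPC, hr, htight⟩ := hP
  have hgrid := hC.mem_grid P hPC
  have hbelow : chainBelow C (P.1 - 1, P.2) ≤ chainBelow C P := chainBelow_mono (by simp) le_rfl
  have habove : chainAbove C P ≤ chainAbove C (P.1 - 1, P.2) := chainAbove_anti (by simp) le_rfl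
  have hNC : (P.1 - 1, P.2) ∈ C :=
    hC.mem_of_add_lt (by simp only; omega) (by simp only; omega) hgrid.2.2.1 hgrid.2.2.2
      (by omega)
  have hPc := (hC.add_one_eq_iff hPC).mp htight
  have hNc := (hC.add_one_eq_iff hNC).mpr ⟨by simp only; omega, by simp only; omega⟩
  exact ⟨hNC, by omega, hNc⟩

lemma onPath_east_or_north (hC : IsMaximalChainBounded m n u C) (hP : OnPath C u r P)
    (hd : (u : ℤ) - n < P.1 - P.2) :
    OnPath C u r (P.1, P.2 + 1) ∨ OnPath C u r (P.1 - 1, P.2) := by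
  have hgrid := hC.mem_grid P hP.1
  have hsum : chainBelow C (P.1, P.2 + 1) + chainAbove C (P.1 - 1, P.2) ≤ u :=
    (chainBelow_add_chainAbove_le (by simp) (by simp)).trans hC.chainNum_le
  have hbelow : r ≤ chainBelow C (P.1, P.2 + 1) := hP.2.1 ▸ chainBelow_mono le_rfl (by simp)
  have hE := (hC.chainBelow_lt (P := (P.1, P.2 + 1)) hgrid.1 (by simp only; omega)).1
  have hN := (hC.chainAbove_le (P := (P.1 - 1, P.2)) (by simp only; omega) hgrid.2.2.2).2
  have hPbelow := (hC.chainBelow_lt hgrid.1 hgrid.2.2.1).1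
  have hPabove := (hC.chainAbove_le hgrid.2.1 hgrid.2.2.2).2
  have := hP.2
  by_cases heast : P.2 < n ∧ chainBelow C (P.1, P.2 + 1) ≤ r
  · exact .inl (hC.onPath_east hP hd heast.1 heast.2)
  · simp only at hE hN
    exact .inr (hC.onPath_north hP hd (by omega) (by omega))

lemma onPath_pathStep (hC : IsMaximalChainBounded m n u C) (hP : OnPath C u r P)
    (hd : (u : ℤ) - n < P.1 - P.2) :
    OnPath C u r (pathStep C u r P) ∧
      (pathStep C u r P).1 - (pathStep C u r P).2 = P.1 - P.2 - 1 := by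
  unfold pathStep
  split_ifs with hE
  · exact ⟨hE, by simp only; ring⟩
  · exact ⟨(hC.onPath_east_or_north hP hd).resolve_left hE, by simp only; ring⟩

lemma onPath_iterate (hC : IsMaximalChainBounded m n u C) (hr : r < u) {k : ℕ}
    (hk : k ≤ m + n - 2 * u) :
    OnPath C u r ((pathStep C u r)^[k] (startPt m u r)) ∧
      ((pathStep C u r)^[k] (startPt m u r)).1 - ((pathStep C u r)^[k] (startPt m u r)).2 =
        (m : ℤ) - u - k := by
  induction k with
  | zero => exact ⟨hC.onPath_startPt hr, by simp [startPt]⟩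
  | succ k ih =>
    have := hC.u_le_m; have := hC.u_le_n
    obtain ⟨hP, hd⟩ := ih (by omega)
    rw [Function.iterate_succ_apply']
    obtain ⟨hQ, hQd⟩ := hC.onPath_pathStep hP (by omega)
    exact ⟨hQ, by push_cast; omega⟩

lemma latticePath_getLast (hC : IsMaximalChainBounded m n u C) (hr : r < u) :
    (latticePath m n u r C).getLast? = some (endPt n u r) := by
  have := hC.u_le_m; have := hC.u_le_n
  obtain ⟨hP, hd⟩ := hC.onPath_iterate hr le_rfl
  rw [latticePath, List.range_succ, List.map_append, List.map_singleton, List.getLast?_concat,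
    hP.eq_of_sub_eq (hC.onPath_endPt hr) (by simp only [endPt]; omega)]

lemma mem_latticePath (hC : IsMaximalChainBounded m n u C) (hr : r < u) :
    P ∈ latticePath m n u r C ↔ OnPath C u r P := by
  constructor
  · rw [latticePath, List.mem_map]
    rintro ⟨k, hk, rfl⟩
    exact (hC.onPath_iterate hr (by rw [List.mem_range] at hk; omega)).1
  · intro hP
    have := hC.u_le_m; have := hC.u_le_n
    obtain ⟨hd, hd'⟩ := hC.sub_mem_Icc_of_onPath hP
    obtain ⟨k, hk⟩ : ∃ k : ℕ, (k : ℤ) = (m : ℤ) - u - (P.1 - P.2) := ⟨_, Int.toNat_of_nonneg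
      (by omega)⟩
    obtain ⟨hQ, hQd⟩ := hC.onPath_iterate hr (k := k) (by omega)
    exact List.mem_map.mpr ⟨k, List.mem_range.mpr (by omega), hQ.eq_of_sub_eq hP (by omega)⟩

lemma card_toFinset_latticePath (hC : IsMaximalChainBounded m n u C) (hr : r < u) :
    (latticePath m n u r C).toFinset.card = m + n - 2 * u + 1 := by
  rw [List.toFinset_card_of_nodup, latticePath, List.length_map, List.length_range]
  refine List.Nodup.map_on (fun k hk l hl hkl => ?_) List.nodup_range
  rw [List.mem_range] at hk hl
  have := (hC.onPath_iterate hr (k := k) (by omega)).2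
  have := (hC.onPath_iterate hr (k := l) (by omega)).2
  rw [hkl] at *
  omega

lemma exists_onPath_or_lt (hC : IsMaximalChainBounded m n u C) (hP : P ∈ C) :
    (∃ r < u, OnPath C u r P) ∨ P.2 < P.1 - ((m : ℤ) - u) ∨ P.1 < P.2 - ((n : ℤ) - u) := by
  by_cases htight : chainBelow C P + chainAbove C P + 1 = u
  · exact .inl ⟨chainBelow C P, by omega, hP, rfl, htight⟩
  · have := hC.add_one_le hP
    exact .inr (hC.lt_or_lt_of_add_two_le hP (by omega))

lemma mem_iff_mem_latticePath_or (hC : IsMaximalChainBounded m n u C) (P : ℤ × ℤ) :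
    P ∈ C ↔ (∃ r < u, P ∈ latticePath m n u r C) ∨
      (1 ≤ P.1 ∧ P.1 ≤ (m : ℤ) ∧ 1 ≤ P.2 ∧ P.2 ≤ (n : ℤ) ∧ P.2 ≤ P.1 - ((m : ℤ) - u)) ∨
      (1 ≤ P.1 ∧ P.1 ≤ (m : ℤ) ∧ 1 ≤ P.2 ∧ P.2 ≤ (n : ℤ) ∧ P.1 ≤ P.2 - ((n : ℤ) - u)) := by
  constructor
  · intro hP
    have hgrid := hC.mem_grid P hP
    rcases hC.exists_onPath_or_lt hP with ⟨r, hr, hPr⟩ | h | h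
    · exact .inl ⟨r, hr, (hC.mem_latticePath hr).mpr hPr⟩
    · exact .inr (.inl ⟨hgrid.1, hgrid.2.1, hgrid.2.2.1, hgrid.2.2.2, h.le⟩)
    · exact .inr (.inr ⟨hgrid.1, hgrid.2.1, hgrid.2.2.1, hgrid.2.2.2, h.le⟩)
  · rintro (⟨r, hr, hPr⟩ | ⟨h1, h2, h3, h4, h⟩ | ⟨h1, h2, h3, h4, h⟩)
    · exact ((hC.mem_latticePath hr).mp hPr).1
    · exact hC.mem_of_le_lower h1 h2 h3 h4 h
    · exact hC.mem_of_le_upper h1 h2 h3 h4 h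

lemma eq_biUnion_union (hC : IsMaximalChainBounded m n u C) :
    C = ((range u).biUnion fun r => (latticePath m n u r C).toFinset) ∪
      lowerCorner m n u ∪ upperCorner m n u := by
  ext P
  simp only [mem_union, mem_biUnion, mem_range, List.mem_toFinset, lowerCorner, upperCorner,
    mem_filter, mem_product, mem_Icc]
  constructor
  · intro hP
    have hgrid := hC.mem_grid P hP
    rcases hC.exists_onPath_or_lt hP with ⟨r, hr, hPr⟩ | h | h
    · exact .inl (.inl ⟨r, hr, (hC.mem_latticePath hr).mpr hPr⟩)
    · exact .inl (.inr ⟨⟨⟨hgrid.1, hgrid.2.1⟩, hgrid.2.2.1, hgrid.2.2.2⟩, h⟩)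
    · exact .inr ⟨⟨⟨hgrid.1, hgrid.2.1⟩, hgrid.2.2.1, hgrid.2.2.2⟩, h⟩
  · rintro ((⟨r, hr, hPr⟩ | ⟨⟨⟨h1, h2⟩, h3, h4⟩, h⟩) | ⟨⟨⟨h1, h2⟩, h3, h4⟩, h⟩)
    · exact ((hC.mem_latticePath hr).mp hPr).1
    · exact hC.mem_of_le_lower h1 h2 h3 h4 h.le
    · exact hC.mem_of_le_upper h1 h2 h3 h4 h.le

lemma card_biUnion_latticePath (hC : IsMaximalChainBounded m n u C) :
    ((range u).biUnion fun r => (latticePath m n u r C).toFinset).card =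
      u * (m + n - 2 * u + 1) := by
  rw [card_biUnion, sum_congr rfl fun r hr => hC.card_toFinset_latticePath (mem_range.mp hr),
    sum_const, card_range, smul_eq_mul]
  intro r hr s hs hrs
  refine disjoint_left.mpr fun P hPr hPs => hrs ?_
  rw [List.mem_toFinset, hC.mem_latticePath (mem_range.mp hr)] at hPr
  rw [List.mem_toFinset, hC.mem_latticePath (mem_range.mp hs)] at hPs
  exact hPr.2.1.symm.trans hPs.2.1

lemma not_mem_corner_of_mem_latticePath (hC : IsMaximalChainBounded m n u C) (hr : r < u)
    (hP : P ∈ latticePath m n u r C) : P ∉ lowerCorner m n u ∧ P ∉ upperCorner m n u := by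
  rw [hC.mem_latticePath hr] at hP
  have := (hC.add_one_eq_iff hP.1).mp hP.2.2
  simp only [lowerCorner, upperCorner, mem_filter]
  omega

lemma card_eq (hC : IsMaximalChainBounded m n u C) :
    C.card = u * (m - u) + u * (n - u) + u * u := by
  have hum := hC.u_le_m; have hun := hC.u_le_n
  have hpath : ∀ {P}, P ∈ (range u).biUnion (fun r => (latticePath m n u r C).toFinset) →
      P ∉ lowerCorner m n u ∧ P ∉ upperCorner m n u := fun hP => by
    obtain ⟨r, hr, hPr⟩ := mem_biUnion.mp hP
    exact hC.not_mem_corner_of_mem_latticePath (mem_range.mp hr) (List.mem_toFinset.mp hPr)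
  have hdisj₁ : Disjoint ((range u).biUnion fun r => (latticePath m n u r C).toFinset)
      (lowerCorner m n u) := disjoint_left.mpr fun _ hP => (hpath hP).1
  have hdisj₂ : Disjoint (((range u).biUnion fun r => (latticePath m n u r C).toFinset) ∪
      lowerCorner m n u) (upperCorner m n u) := by
    refine disjoint_left.mpr fun _ hP hPu => ?_
    rcases mem_union.mp hP with hP | hPl
    · exact (hpath hP).2 hPu
    · simp only [lowerCorner, upperCorner, mem_filter] at hPl hPu
      omega
  rw [hC.eq_biUnion_union, card_union_of_disjoint hdisj₂, card_union_of_disjoint hdisj₁,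
    hC.card_biUnion_latticePath, add_assoc, card_lowerCorner_add_card_upperCorner hum hun]
  have : u ≤ u * u := Nat.le_mul_self u
  zify [this, (by omega : 2 * u ≤ m + n), hum, hun]
  ring

end IsMaximalChainBounded

theorem stmt9_general (m n u : ℕ) (hum : u ≤ m) (hun : u ≤ n)
    (C : Finset (ℤ × ℤ))
    (hC : ∀ P ∈ C, 1 ≤ P.1 ∧ P.1 ≤ (m : ℤ) ∧ 1 ≤ P.2 ∧ P.2 ≤ (n : ℤ))
    (hchain : ∀ D : Finset (ℤ × ℤ), D ⊆ C → IsDiagChain D → D.card ≤ u)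
    (hmax : ∀ P : ℤ × ℤ, 1 ≤ P.1 → P.1 ≤ (m : ℤ) → 1 ≤ P.2 → P.2 ≤ (n : ℤ) → P ∉ C →
      ∃ D : Finset (ℤ × ℤ), D ⊆ insert P C ∧ IsDiagChain D ∧ D.card = u + 1) :
    (∃ H : Fin u → List (ℤ × ℤ),
      (∀ p, IsLatticePath (H p)) ∧
      (∀ p : Fin u, (H p).head? =
        some ((m : ℤ) - (u : ℤ) + ((p : ℕ) : ℤ) + 1, ((p : ℕ) : ℤ) + 1)) ∧
      (∀ p : Fin u, (H p).getLast? =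
        some (((p : ℕ) : ℤ) + 1, (n : ℤ) - (u : ℤ) + ((p : ℕ) : ℤ) + 1)) ∧
      (∀ p q : Fin u, p ≠ q → ∀ x ∈ H p, x ∉ H q) ∧
      (↑C = ({P : ℤ × ℤ | ∃ p, P ∈ H p} ∪
        {P : ℤ × ℤ | 1 ≤ P.1 ∧ P.1 ≤ (m : ℤ) ∧ 1 ≤ P.2 ∧ P.2 ≤ (n : ℤ) ∧
          P.2 ≤ P.1 - ((m : ℤ) - u)} ∪
        {P : ℤ × ℤ | 1 ≤ P.1 ∧ P.1 ≤ (m : ℤ) ∧ 1 ≤ P.2 ∧ P.2 ≤ (n : ℤ) ∧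
          P.1 ≤ P.2 - ((n : ℤ) - u)}))) ∧
    C.card = u * (m - u) + u * (n - u) + u * u := by
  have hC' : IsMaximalChainBounded m n u C := ⟨hum, hun, hC, hchain, hmax⟩
  refine ⟨⟨fun p => latticePath m n u p C, fun p => isLatticePath_latticePath m n u p C,
    fun p => latticePath_head m n u p C, fun p => hC'.latticePath_getLast p.isLt, ?_, ?_⟩,
    hC'.card_eq⟩
  · intro p q hpq x hxp hxq
    rw [hC'.mem_latticePath p.isLt] at hxp
    rw [hC'.mem_latticePath q.isLt] at hxq
    exact hpq (Fin.ext (hxp.2.1.symm.trans hxq.2.1))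
  · ext P
    simp only [Set.mem_union, Set.mem_ofPred_eq, mem_coe, hC'.mem_iff_mem_latticePath_or,
      Fin.exists_iff, exists_prop, or_assoc]

/-- A maximal subset of the grid [1,m]×[1,n] with no diagonal chain of size u+1 is the
union of u vertex-disjoint lattice paths from (m-u+i,i) to (i,n-u+i), i = 1,…,u, and the
two corner triangles; in particular it has u(m-u)+u(n-u)+u² points. -/
theorem stmt9 (m n u : ℕ) (hu : 0 < u) (hum : u ≤ m) (hun : u ≤ n)
    (C : Finset (ℤ × ℤ))
    (hC : ∀ P ∈ C, 1 ≤ P.1 ∧ P.1 ≤ (m : ℤ) ∧ 1 ≤ P.2 ∧ P.2 ≤ (n : ℤ))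
    (hchain : ∀ D : Finset (ℤ × ℤ), D ⊆ C → IsDiagChain D → D.card ≤ u)
    (hmax : ∀ P : ℤ × ℤ, 1 ≤ P.1 → P.1 ≤ (m : ℤ) → 1 ≤ P.2 → P.2 ≤ (n : ℤ) → P ∉ C →
      ∃ D : Finset (ℤ × ℤ), D ⊆ insert P C ∧ IsDiagChain D ∧ D.card = u + 1) :
    (∃ H : Fin u → List (ℤ × ℤ),
      (∀ p, IsLatticePath (H p)) ∧
      (∀ p : Fin u, (H p).head? =
        some ((m : ℤ) - (u : ℤ) + ((p : ℕ) : ℤ) + 1, ((p : ℕ) : ℤ) + 1)) ∧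
      (∀ p : Fin u, (H p).getLast? =
        some (((p : ℕ) : ℤ) + 1, (n : ℤ) - (u : ℤ) + ((p : ℕ) : ℤ) + 1)) ∧
      (∀ p q : Fin u, p ≠ q → ∀ x ∈ H p, x ∉ H q) ∧
      (↑C = ({P : ℤ × ℤ | ∃ p, P ∈ H p} ∪
        {P : ℤ × ℤ | 1 ≤ P.1 ∧ P.1 ≤ (m : ℤ) ∧ 1 ≤ P.2 ∧ P.2 ≤ (n : ℤ) ∧
          P.2 ≤ P.1 - ((m : ℤ) - u)} ∪
        {P : ℤ × ℤ | 1 ≤ P.1 ∧ P.1 ≤ (m : ℤ) ∧ 1 ≤ P.2 ∧ P.2 ≤ (n : ℤ) ∧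
          P.1 ≤ P.2 - ((n : ℤ) - u)}))) ∧
    C.card = u * (m - u) + u * (n - u) + u * u :=
  stmt9_general m n u hum hun C hC hchain hmax
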